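/- Let L_k(M₁, …, M_k) = f(M_k ⋯ M₁) where f is continuous, and suppose (M₁, …, M_k) is a local minimum of L_k. Suppose matrices (M̃₁, …, M̃_k) satisfy M̃_k ⋯ M̃₁ = M_k ⋯ M₁ and can be obtained from (M₁, …, M_k) by arbitrarily small perturbations along a continuous path keeping the product constant (specifically M̃_i = M_i + w_i v_iᵀ with M_k⋯M_{i+1} w_i = 0 and ‖v_i‖ arbitrarily small). Then for sufficiently small v_i, (M̃₁, …, M̃_k) is also a local minimum of L_k with the same value. -/
import Mathlib


attribute [local instance] Matrix.frobeniusNormedAddCommGroup Matrix.frobeniusNormedSpace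

/-- Product `M (b-1) * ⋯ * M a` of a chain of matrices (identity when `b = a`,
junk value `0` when `b < a`). -/
def chainProd (d : ℕ → ℕ) (M : ∀ i : ℕ, Matrix (Fin (d (i + 1))) (Fin (d i)) ℝ)
    (a : ℕ) : (b : ℕ) → Matrix (Fin (d b)) (Fin (d a)) ℝ
  | 0 => if h : 0 = a then by rw [← h]; exact 1 else 0
  | (b + 1) => if h : b + 1 = a then by rw [← h]; exact 1
      else M b * chainProd d M a b


lemma chainProd_self (d : ℕ → ℕ) (M : ∀ i : ℕ, Matrix (Fin (d (i + 1))) (Fin (d i)) ℝ)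
    (a : ℕ) : chainProd d M a a = 1 := by
  cases a with
  | zero => rfl
  | succ n =>
    show (if h : n + 1 = n + 1 then _ else _) = _
    rw [dif_pos rfl]
    rfl

lemma chainProd_succ (d : ℕ → ℕ) (M : ∀ i : ℕ, Matrix (Fin (d (i + 1))) (Fin (d i)) ℝ)
    (a b : ℕ) (h : b + 1 ≠ a) :
    chainProd d M a (b + 1) = M b * chainProd d M a b := by
  show (if h : b + 1 = a then _ else _) = _
  rw [dif_neg h]

lemma chainProd_peel (d : ℕ → ℕ) (M : ∀ i : ℕ, Matrix (Fin (d (i + 1))) (Fin (d i)) ℝ) :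
    ∀ b a, a < b → chainProd d M a b = chainProd d M (a + 1) b * M a := by
  intro b
  induction b with
  | zero => omega
  | succ b ih =>
    intro a hab
    rcases Nat.lt_succ_iff_lt_or_eq.mp hab with h | h
    · rw [chainProd_succ _ _ _ _ (by omega), ih a h,
        chainProd_succ _ _ _ _ (by omega : b + 1 ≠ a + 1), Matrix.mul_assoc]
    · subst h
      rw [chainProd_succ _ _ _ _ (by omega), chainProd_self, chainProd_self,
        Matrix.mul_one, Matrix.one_mul]

/-- Extend a `Fin k`-indexed tuple of layer matrices to an `ℕ`-indexed one (by `0`). -/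
def ext (d : ℕ → ℕ) (k : ℕ)
    (N : ∀ i : Fin k, Matrix (Fin (d (i.1 + 1))) (Fin (d i.1)) ℝ) :
    ∀ i : ℕ, Matrix (Fin (d (i + 1))) (Fin (d i)) ℝ :=
  fun i => if h : i < k then N ⟨i, h⟩ else 0

lemma ext_lt (d : ℕ → ℕ) (k : ℕ)
    (N : ∀ i : Fin k, Matrix (Fin (d (i.1 + 1))) (Fin (d i.1)) ℝ) (a : ℕ) (h : a < k) :
    ext d k N a = N ⟨a, h⟩ := dif_pos h

open Matrix in
lemma mul_vecMulVec'' {l m n : Type*} [Fintype m] (A : Matrix l m ℝ) (u : m → ℝ)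
    (v : n → ℝ) : A * vecMulVec u v = vecMulVec (A *ᵥ u) v := by
  ext i j
  simp [Matrix.mul_apply, vecMulVec_apply, mulVec, dotProduct, Finset.sum_mul, mul_assoc]

open Matrix in
lemma prod_eq' (d : ℕ → ℕ) (k : ℕ)
    (M : ∀ i : Fin k, Matrix (Fin (d (i.1 + 1))) (Fin (d i.1)) ℝ)
    (w : ∀ i : Fin k, Fin (d (i.1 + 1)) → ℝ)
    (hw : ∀ i : Fin k, chainProd d (ext d k M) (i.1 + 1) k *ᵥ w i = 0)
    (v : ∀ i : Fin k, Fin (d i.1) → ℝ) :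
    ∀ j a, a + j = k →
      chainProd d (ext d k fun i => M i + Matrix.vecMulVec (w i) (v i)) a k =
      chainProd d (ext d k M) a k := by
  intro j
  induction j with
  | zero =>
    intro a ha
    have : a = k := by omega
    subst this
    rw [chainProd_self, chainProd_self]
  | succ j ih =>
    intro a ha
    have hak : a < k := by omega
    rw [chainProd_peel _ _ _ _ hak, chainProd_peel d (ext d k M) _ _ hak,
      ih (a + 1) (by omega), ext_lt d k _ a hak, ext_lt d k M a hak,
      Matrix.mul_add, mul_vecMulVec'', hw ⟨a, hak⟩]
    ext i' j'
    simp [vecMulVec_apply]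

open Matrix in
def pertL (d : ℕ → ℕ) (k : ℕ) (w : ∀ i : Fin k, Fin (d (i.1 + 1)) → ℝ) :
    (∀ i : Fin k, Fin (d i.1) → ℝ) →ₗ[ℝ]
      (∀ i : Fin k, Matrix (Fin (d (i.1 + 1))) (Fin (d i.1)) ℝ) where
  toFun v := fun i => vecMulVec (w i) (v i)
  map_add' v v' := by
    funext i
    ext a b
    simp [vecMulVec_apply, mul_add]
  map_smul' c v := by
    funext i
    ext a b
    simp [vecMulVec_apply]
    ring

open Matrix in
/-- rank-one perturbations `M̃ i = M i + w i (v i)ᵀ` with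
`M_k ⋯ M_{i+1} (w i) = 0` keep the product constant, and for all sufficiently small
`v i` the perturbed tuple is again a local minimum of `L_k` with the same value. -/
theorem stmt_7 (d : ℕ → ℕ) (k : ℕ)
    (f : Matrix (Fin (d k)) (Fin (d 0)) ℝ → ℝ) (hf : Continuous f)
    (M : ∀ i : Fin k, Matrix (Fin (d (i.1 + 1))) (Fin (d i.1)) ℝ)
    (hloc : IsLocalMin (fun N => f (chainProd d (ext d k N) 0 k)) M)
    (w : ∀ i : Fin k, Fin (d (i.1 + 1)) → ℝ)
    (hw : ∀ i : Fin k, chainProd d (ext d k M) (i.1 + 1) k *ᵥ w i = 0) :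
    ∃ ε : ℝ, 0 < ε ∧ ∀ v : ∀ i : Fin k, Fin (d i.1) → ℝ, (∀ i, ‖v i‖ < ε) →
      IsLocalMin (fun N => f (chainProd d (ext d k N) 0 k))
          (fun i => M i + Matrix.vecMulVec (w i) (v i)) ∧
        f (chainProd d (ext d k fun i => M i + Matrix.vecMulVec (w i) (v i)) 0 k) =
          f (chainProd d (ext d k M) 0 k) := by
  set L : (∀ i : Fin k, Matrix (Fin (d (i.1 + 1))) (Fin (d i.1)) ℝ) → ℝ :=
    fun N => f (chainProd d (ext d k N) 0 k) with hL
  obtain ⟨δ, hδ, hball⟩ := Metric.eventually_nhds_iff.mp hloc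
  have hcont : Continuous fun v : ∀ i : Fin k, Fin (d i.1) → ℝ => M + pertL d k w v :=
    continuous_const.add (pertL d k w).continuous_of_finiteDimensional
  obtain ⟨ε, hε, hεball⟩ := Metric.continuousAt_iff.mp hcont.continuousAt (δ / 2) (by linarith)
  refine ⟨ε, hε, fun v hv => ?_⟩
  have hvn : dist v 0 < ε := by
    rw [dist_zero_right]
    exact (pi_norm_lt_iff hε).mpr hv
  have hgv : M + pertL d k w v = fun i => M i + Matrix.vecMulVec (w i) (v i) := rfl
  have hdist : dist (fun i => M i + Matrix.vecMulVec (w i) (v i)) M < δ / 2 := by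
    have := hεball hvn
    rwa [show M + pertL d k w 0 = M by simp, hgv] at this
  have hEq : ∀ a, a ≤ k →
      chainProd d (ext d k fun i => M i + Matrix.vecMulVec (w i) (v i)) a k =
      chainProd d (ext d k M) a k := fun a hak =>
    prod_eq' d k M w hw v (k - a) a (by omega)
  have hval : L (fun i => M i + Matrix.vecMulVec (w i) (v i)) = L M := by
    rw [hL]
    simp only
    rw [hEq 0 (Nat.zero_le k)]
  refine ⟨?_, hval⟩
  refine Metric.eventually_nhds_iff.mpr ⟨δ / 2, by linarith, fun N hN => ?_⟩
  show L _ ≤ L N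
  rw [hval]
  apply hball
  calc dist N M ≤ dist N (fun i => M i + Matrix.vecMulVec (w i) (v i)) +
        dist (fun i => M i + Matrix.vecMulVec (w i) (v i)) M := dist_triangle _ _ _
    _ < δ / 2 + δ / 2 := by exact add_lt_add hN hdist
    _ = δ := by ring
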